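/- For z ∈ {−1,1}^n and i ∈ {1,…,n} define m_{i,z} = 2^{−n} ∫₀¹ z_i · ∏_{k≠i} (1 + ρ z_k) dρ. Then ∑_{z∈{−1,1}^n} max_{1≤i≤n} |m_{i,z}| = log n + O(1); that is, there exists a constant C > 0 such that for all n ≥ 2, | ∑_{z∈{−1,1}^n} max_{1≤i≤n} |m_{i,z}| − log n | ≤ C. In particular, the norm of the operator f ↦ ∫₀^∞ ∇P_t f dt from L¹ of the Hamming cube to L¹ with values in ℓ^∞_n grows like log n. -/

import Mathlib

/-- The coordinate value `z_i = ±1` of a Boolean-encoded point of the Hamming cube. -/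
def chi (b : Bool) : ℝ := if b then 1 else -1

/-- The matrix element `m_{i,z} = 2^{−n} ∫₀¹ z_i ∏_{k≠i}(1 + ρ z_k) dρ` of the
convolution kernel of the operator `f ↦ ∫₀^∞ ∇ e^{tΔ} f dt` on the Hamming cube,
evaluated at the all-ones vertex. -/
noncomputable def mel (n : ℕ) (i : Fin n) (z : Fin n → Bool) : ℝ :=
  (2 : ℝ) ^ (-(n : ℤ)) *
    ∫ ρ in (0 : ℝ)..1, chi (z i) * ∏ k ∈ Finset.univ.erase i, (1 + ρ * chi (z k))

/-
Let `a` be the number of coordinates `k ≠ i` with `z_k = 1`. Then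
`|m_{i,z}| = 2^{-n} ∫₀¹ (1+ρ)^a (1-ρ)^{n-1-a} dρ`, which increases with `a`, so the maximum over `i`
is attained at `a = min(#{k | z_k = 1}, n-1)`. Grouping the points of the cube by this count and
using `∑_{m<n} C(n,m) x^m y^{n-1-m} = ∑_{j<n} x^j (x+y)^{n-1-j}` (both sides times `y` equal
`(x+y)^n - x^n`) at `x = 1+ρ`, `y = 1-ρ`, the sum becomes
`∑_{j<n} (1 - 2^{-(j+1)})/(j+1) + (1 - 2^{-n})/n`, which differs from the harmonic number `H_n`
by at most `1`; and `log n ≤ H_n ≤ 1 + log n`.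
-/

open Finset

section Counting

variable {ι : Type*} [Fintype ι] [DecidableEq ι]

theorem sum_boolFun_apply_card_filter {M : Type*} [AddCommMonoid M] (G : ℕ → M) :
    ∑ z : ι → Bool, G #{k | z k} =
      ∑ m ∈ range (Fintype.card ι + 1), (Fintype.card ι).choose m • G m := by
  let e : (ι → Bool) ≃ Finset ι :=
    { toFun := fun z => {k | z k}
      invFun := fun s k => k ∈ s
      left_inv := fun z => by ext k; simp
      right_inv := fun s => by ext k; simp }
  rw [← card_univ, ← sum_powerset_apply_card, powerset_univ]
  exact Fintype.sum_equiv e _ _ fun _ => rfl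

theorem isGreatest_range_card_filter_erase [Nonempty ι] (z : ι → Bool) :
    IsGreatest (Set.range fun i => #{k ∈ univ.erase i | z k})
      (min #{k | z k} (Fintype.card ι - 1)) := by
  have card_erase (i : ι) : #(univ.erase i) = Fintype.card ι - 1 := by
    rw [card_erase_of_mem (mem_univ i), card_univ]
  refine ⟨?_, ?_⟩
  · by_cases hall : ∀ k, z k = true
    · obtain ⟨i⟩ := ‹Nonempty ι›
      refine ⟨i, ?_⟩
      simp only [filter_true_of_mem fun k _ => hall k, card_erase, card_univ]
      omega
    · push Not at hall
      obtain ⟨i, hi⟩ := hall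
      have hs : #{k | z k} ≤ Fintype.card ι - 1 := by
        rw [← card_erase i]
        exact card_le_card fun k hk => mem_erase.2 ⟨by rintro rfl; simp_all, mem_univ k⟩
      refine ⟨i, ?_⟩
      simp only [filter_erase, erase_eq_of_notMem (by simp [hi] : i ∉ ({k | z k} : Finset ι))]
      omega
  · rintro _ ⟨i, rfl⟩
    exact le_min (card_le_card (filter_subset_filter _ (erase_subset i _)))
      (card_erase i ▸ card_filter_le _ _)

end Counting

theorem sum_choose_mul_pow_mul_pow_sub_one {K : Type*} [Field K] (x y : K) (hy : y ≠ 0) (n : ℕ) :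
    ∑ m ∈ range n, (n.choose m : K) * x ^ m * y ^ (n - 1 - m) =
      ∑ j ∈ range n, x ^ j * (x + y) ^ (n - 1 - j) := by
  refine mul_right_cancel₀ hy ?_
  have binomial : (∑ m ∈ range n, (n.choose m : K) * x ^ m * y ^ (n - 1 - m)) * y =
      (x + y) ^ n - x ^ n := by
    rw [add_pow, sum_range_succ, Nat.sub_self, pow_zero, Nat.choose_self, sum_mul]
    simp only [Nat.cast_one, mul_one, add_sub_cancel_right]
    refine sum_congr rfl fun m hm => ?_
    rw [show n - m = n - 1 - m + 1 by grind, pow_succ]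
    ring
  have geom := geom_sum₂_mul x (x + y) n
  rw [binomial, ← neg_sub, ← geom]
  ring

section PowIntegral

open intervalIntegral

noncomputable def powIntegral (a b : ℕ) : ℝ := ∫ ρ in (0 : ℝ)..1, (1 + ρ) ^ a * (1 - ρ) ^ b

theorem powIntegral_nonneg (a b : ℕ) : 0 ≤ powIntegral a b :=
  integral_nonneg zero_le_one fun ρ hρ => by
    have : 0 ≤ 1 - ρ := by linarith [hρ.2]
    have : 0 ≤ 1 + ρ := by linarith [hρ.1]
    positivity

theorem powIntegral_mono {a a' b b' : ℕ} (ha : a ≤ a') (hb : b' ≤ b) :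
    powIntegral a b ≤ powIntegral a' b' := by
  refine integral_mono_on zero_le_one (Continuous.intervalIntegrable (by fun_prop) _ _)
    (Continuous.intervalIntegrable (by fun_prop) _ _) fun ρ hρ => ?_
  have h₀ : 0 ≤ 1 - ρ := by linarith [hρ.2]
  have h₁ : 1 - ρ ≤ 1 := by linarith [hρ.1]
  have h₂ : 1 ≤ 1 + ρ := by linarith [hρ.1]
  exact mul_le_mul (pow_le_pow_right₀ h₂ ha) (pow_le_pow_of_le_one h₀ h₁ hb) (by positivity)
    (by positivity)

theorem powIntegral_zero_right (j : ℕ) : powIntegral j 0 = (2 ^ (j + 1) - 1) / (j + 1) := by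
  simp only [powIntegral, pow_zero, mul_one]
  rw [integral_comp_add_left (fun x => x ^ j), integral_pow]
  norm_num

theorem sum_choose_mul_powIntegral (n : ℕ) :
    ∑ m ∈ range n, (n.choose m : ℝ) * powIntegral m (n - 1 - m) =
      ∑ j ∈ range n, 2 ^ (n - 1 - j) * powIntegral j 0 := by
  simp only [powIntegral, ← integral_const_mul]
  rw [← integral_finsetSum fun _ _ => Continuous.intervalIntegrable (by fun_prop) _ _,
    ← integral_finsetSum fun _ _ => Continuous.intervalIntegrable (by fun_prop) _ _]
  refine integral_congr_ae ?_
  filter_upwards [(Set.countable_singleton (1 : ℝ)).ae_notMem MeasureTheory.volume] with ρ hρ _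
  have key := sum_choose_mul_pow_mul_pow_sub_one (1 + ρ) (1 - ρ)
    (sub_ne_zero.2 (Ne.symm hρ)) n
  rw [show 1 + ρ + (1 - ρ) = 2 by ring] at key
  simp only [pow_zero, mul_one, ← mul_assoc, key]
  exact sum_congr rfl fun j _ => mul_comm _ _

end PowIntegral

theorem one_add_mul_chi (ρ : ℝ) (b : Bool) : 1 + ρ * chi b = if b then 1 + ρ else 1 - ρ := by
  cases b <;> simp [chi, sub_eq_add_neg]

theorem abs_chi (b : Bool) : |chi b| = 1 := by
  cases b <;> simp [chi]

theorem prod_one_add_mul_chi {ι : Type*} (s : Finset ι) (z : ι → Bool) (ρ : ℝ) :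
    ∏ k ∈ s, (1 + ρ * chi (z k)) = (1 + ρ) ^ #{k ∈ s | z k} * (1 - ρ) ^ #{k ∈ s | ¬z k} := by
  simp only [one_add_mul_chi, prod_ite, prod_const]

theorem abs_mel (n : ℕ) (i : Fin n) (z : Fin n → Bool) :
    |mel n i z| = 2⁻¹ ^ n * powIntegral #{k ∈ univ.erase i | z k}
      (n - 1 - #{k ∈ univ.erase i | z k}) := by
  have hcard : #{k ∈ univ.erase i | ¬z k} = n - 1 - #{k ∈ univ.erase i | z k} := by
    have := card_filter_add_card_filter_not (s := univ.erase i) (fun k => z k = true)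
    rw [card_erase_of_mem (mem_univ i), card_univ, Fintype.card_fin] at this
    omega
  have hmel : mel n i z = 2⁻¹ ^ n * (chi (z i) * powIntegral #{k ∈ univ.erase i | z k}
      (n - 1 - #{k ∈ univ.erase i | z k})) := by
    simp only [mel, powIntegral, prod_one_add_mul_chi, hcard, zpow_neg, zpow_natCast, inv_pow,
      intervalIntegral.integral_const_mul]
  rw [hmel, abs_mul, abs_mul, abs_chi, abs_of_nonneg (powIntegral_nonneg _ _),
    abs_of_nonneg (by positivity), one_mul]

theorem iSup_abs_mel {n : ℕ} (hn : 1 ≤ n) (z : Fin n → Bool) :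
    ⨆ i, |mel n i z| =
      2⁻¹ ^ n * powIntegral (min #{k | z k} (n - 1)) (n - 1 - min #{k | z k} (n - 1)) := by
  have : Nonempty (Fin n) := ⟨⟨0, hn⟩⟩
  have hmono : Monotone fun a => (2⁻¹ : ℝ) ^ n * powIntegral a (n - 1 - a) := fun a a' h =>
    mul_le_mul_of_nonneg_left (powIntegral_mono h (by omega)) (by positivity)
  have hmax := hmono.map_isGreatest (isGreatest_range_card_filter_erase z)
  rw [Fintype.card_fin, ← Set.range_comp] at hmax
  simp only [iSup, abs_mel]
  exact hmax.csSup_eq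

theorem inv_two_pow_mul_powIntegral_zero_right (j : ℕ) :
    (2⁻¹ : ℝ) ^ (j + 1) * powIntegral j 0 = (1 - 2⁻¹ ^ (j + 1)) / (j + 1) := by
  rw [powIntegral_zero_right, inv_pow]
  field_simp

theorem sum_iSup_abs_mel {n : ℕ} (hn : 1 ≤ n) :
    ∑ z : Fin n → Bool, ⨆ i, |mel n i z| =
      ∑ j ∈ range n, (1 - (2⁻¹ : ℝ) ^ (j + 1)) / (j + 1) + (1 - (2⁻¹ : ℝ) ^ n) / n := by
  simp only [iSup_abs_mel hn]
  rw [sum_boolFun_apply_card_filter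
      (fun m => (2⁻¹ : ℝ) ^ n * powIntegral (min m (n - 1)) (n - 1 - min m (n - 1))),
    Fintype.card_fin, sum_range_succ]
  have hshift {j : ℕ} (hj : j < n) : (2⁻¹ : ℝ) ^ n * 2 ^ (n - 1 - j) = 2⁻¹ ^ (j + 1) := by
    obtain ⟨k, rfl⟩ := Nat.exists_eq_add_of_lt hj
    rw [show j + k + 1 - 1 - j = k by omega, show j + k + 1 = k + (j + 1) by ring, pow_add,
      inv_pow 2 k]
    field_simp
  congr 1
  · calc ∑ m ∈ range n, n.choose m • ((2⁻¹ : ℝ) ^ n *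
          powIntegral (min m (n - 1)) (n - 1 - min m (n - 1)))
        = 2⁻¹ ^ n * ∑ m ∈ range n, (n.choose m : ℝ) * powIntegral m (n - 1 - m) := by
          rw [mul_sum]
          refine sum_congr rfl fun m hm => ?_
          rw [min_eq_left (by grind), nsmul_eq_mul, mul_left_comm]
      _ = ∑ j ∈ range n, 2⁻¹ ^ n * 2 ^ (n - 1 - j) * powIntegral j 0 := by
          simp only [sum_choose_mul_powIntegral, mul_sum, mul_assoc]
      _ = _ := sum_congr rfl fun j hj => by
          rw [hshift (mem_range.1 hj), inv_two_pow_mul_powIntegral_zero_right]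
  · rw [min_eq_right (Nat.sub_le n 1), Nat.sub_self, Nat.choose_self, one_smul]
    obtain ⟨k, rfl⟩ := Nat.exists_eq_add_of_le' hn
    rw [Nat.add_sub_cancel, inv_two_pow_mul_powIntegral_zero_right]
    push_cast
    rfl

theorem sum_inv_two_pow_succ_le_one (n : ℕ) : ∑ j ∈ range n, (2⁻¹ : ℝ) ^ (j + 1) ≤ 1 := by
  have h := sum_geometric_two_le n
  simp only [pow_succ, ← sum_mul, one_div] at h ⊢
  linarith

theorem sum_one_sub_inv_two_pow_div_le_harmonic (n : ℕ) :
    ∑ j ∈ range n, (1 - (2⁻¹ : ℝ) ^ (j + 1)) / (j + 1) ≤ harmonic n := by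
  push_cast [harmonic]
  refine sum_le_sum fun j _ => ?_
  rw [div_eq_mul_inv]
  exact mul_le_of_le_one_left (by positivity) (by simp only [sub_le_self_iff]; positivity)

theorem harmonic_sub_one_le_sum_one_sub_inv_two_pow_div (n : ℕ) :
    (harmonic n : ℝ) - 1 ≤ ∑ j ∈ range n, (1 - (2⁻¹ : ℝ) ^ (j + 1)) / (j + 1) := by
  calc (harmonic n : ℝ) - 1 ≤ ∑ j ∈ range n, (((j : ℝ) + 1)⁻¹ - 2⁻¹ ^ (j + 1)) := by
        push_cast [harmonic, sum_sub_distrib]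
        linarith [sum_inv_two_pow_succ_le_one n]
    _ ≤ _ := sum_le_sum fun j _ => by
        rw [sub_div, one_div]
        gcongr
        exact div_le_self (by positivity) (by linarith [(j.cast_nonneg : (0 : ℝ) ≤ j)])

/-- `∑_{z∈{−1,1}^n} max_i |m_{i,z}| = log n + O(1)`: there is a constant `C > 0`
such that for all `n ≥ 2` one has
`|∑_z max_i |m_{i,z}| − log n| ≤ C`.  In particular, the norm of
`f ↦ ∫₀^∞ ∇P_t f dt` from `L¹` of the cube to `L¹(ℓ^∞_n)` grows like `log n`. -/
theorem kernel_l1_linfty_norm_log_growth :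
    ∃ C > (0 : ℝ), ∀ n : ℕ, 2 ≤ n →
      |(∑ z : Fin n → Bool, ⨆ i : Fin n, |mel n i z|) - Real.log n| ≤ C := by
  refine ⟨2, two_pos, fun n hn => ?_⟩
  have hn' : (1 : ℝ) ≤ n := by exact_mod_cast (by omega : 1 ≤ n)
  have hlog : Real.log n ≤ harmonic n :=
    calc Real.log n ≤ Real.log (n + 1) := Real.log_le_log (by positivity) (by linarith)
      _ ≤ harmonic n := by exact_mod_cast log_add_one_le_harmonic n
  have hpow : (2⁻¹ : ℝ) ^ n ≤ 1 := pow_le_one₀ (by norm_num) (by norm_num)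
  have hlast₀ : 0 ≤ (1 - (2⁻¹ : ℝ) ^ n) / n := div_nonneg (by linarith) (by positivity)
  have hlast₁ : (1 - (2⁻¹ : ℝ) ^ n) / n ≤ 1 :=
    div_le_one_of_le₀ (by linarith [pow_nonneg (by norm_num : (0 : ℝ) ≤ 2⁻¹) n]) (by positivity)
  rw [sum_iSup_abs_mel (by omega), abs_le]
  constructor <;> linarith [harmonic_le_one_add_log n, sum_one_sub_inv_two_pow_div_le_harmonic n,
    harmonic_sub_one_le_sum_one_sub_inv_two_pow_div n]
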